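/- For every vertex v of the integer hull of {x ≥ 0 : Ax = b} with A ∈ ℤ^{m×n}, Δ = ‖A‖_∞, and s = |supp(v)|, one has s ≤ m·log₂(4.24·e·√s·Δ + 2e). -/

import Mathlib

open Matrix

/-- The integer hull of `{x ≥ 0 : Ax = b}`. -/
def integerHull {m n : ℕ} (A : Matrix (Fin m) (Fin n) ℤ) (b : Fin m → ℤ) :
    Set (Fin n → ℝ) :=
  convexHull ℝ
    {x | ∃ z : Fin n → ℤ, (∀ i, 0 ≤ z i) ∧ A.mulVec z = b ∧ x = fun i => (z i : ℝ)}

/-- `v` is a vertex of `P` if `v ∈ P` and `v` is not in the convex hull of `P \ {v}`. -/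
def IsVertex {n : ℕ} (P : Set (Fin n → ℝ)) (v : Fin n → ℝ) : Prop :=
  v ∈ P ∧ v ∉ convexHull ℝ (P \ {v})

/-!
A vertex `z` of the integer hull is a feasible integer point, and for the subsets `T` of its
support `S` the vectors `D_T = A (2 𝟙_T - 𝟙_S)` are pairwise distinct: if `D_T = D_U`, then
`z ± (𝟙_T - 𝟙_U)` are feasible points with midpoint `z`. Summed over all `T`, the squared entries
of row `i` give `2^s ∑_{j ∈ S} A_ij²`, so by Cauchy–Schwarz the mean `ℓ₁`-norm of `D_T` is at most
`m √s Δ`, and by Markov at least half of the `D_T` have `ℓ₁`-norm at most `2 m √s Δ`. All `D_T`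
agree modulo `2`, which lets us fold them injectively into `ℕ^m` without increasing the norm, so
stars and bars gives `2^s ≤ 2 C(⌊2 m √s Δ⌋ + m, m) ≤ (2e (2 √s Δ + 1))^m`.
-/

open Finset

section Vertex

variable {n : ℕ} {v : Fin n → ℝ}

theorem IsVertex.mem_of_convexHull {X : Set (Fin n → ℝ)} (hv : IsVertex (convexHull ℝ X) v) :
    v ∈ X := by
  by_contra hvX
  refine hv.2 (convexHull_mono (fun x hx => ?_) hv.1)
  exact ⟨subset_convexHull ℝ X hx, fun hxv => hvX (hxv ▸ hx)⟩

theorem IsVertex.eq_zero_of_add_mem_of_sub_mem {P : Set (Fin n → ℝ)} (hv : IsVertex P v)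
    {d : Fin n → ℝ} (hadd : v + d ∈ P) (hsub : v - d ∈ P) : d = 0 := by
  by_contra hd
  have hpair : {v + d, v - d} ⊆ P \ {v} := by
    rintro w (rfl | rfl)
    · exact ⟨hadd, by simpa using hd⟩
    · exact ⟨hsub, by simpa using hd⟩
  refine hv.2 (convexHull_mono hpair ?_)
  rw [convexHull_pair]
  refine ⟨1 / 2, 1 / 2, by norm_num, by norm_num, by norm_num, ?_⟩
  module

end Vertex

section IntegerHull

variable {m n : ℕ} {A : Matrix (Fin m) (Fin n) ℤ} {b : Fin m → ℤ}

theorem cast_mem_integerHull {y : Fin n → ℤ} (hy : ∀ j, 0 ≤ y j) (hAy : A *ᵥ y = b) :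
    (fun j => (y j : ℝ)) ∈ integerHull A b :=
  subset_convexHull ℝ _ ⟨y, hy, hAy, rfl⟩

theorem mulVec_indicator (A : Matrix (Fin m) (Fin n) ℤ) (T : Finset (Fin n)) (i : Fin m) :
    (A *ᵥ fun j => if j ∈ T then 1 else 0) i = ∑ j ∈ T, A i j := by
  simp [mulVec, dotProduct]

theorem IsVertex.injOn_sum_cols {z : Fin n → ℤ} (hz : ∀ j, 0 ≤ z j) (hAz : A *ᵥ z = b)
    (hv : IsVertex (integerHull A b) fun j => (z j : ℝ)) :
    Set.InjOn (fun T i => ∑ j ∈ T, A i j) (univ.filter (z · ≠ 0)).powerset := by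
  intro T hT U hU hTU
  simp only [coe_powerset, Set.mem_preimage, Set.mem_powerset_iff, coe_subset] at hT hU
  set d : Fin n → ℤ := (fun j => if j ∈ T then 1 else 0) - (fun j => if j ∈ U then 1 else 0)
  have hAd : A *ᵥ d = 0 := by
    ext i
    simpa [d, mulVec_sub, mulVec_indicator, sub_eq_zero] using congrFun hTU i
  have hzd : ∀ j, 0 ≤ (z - d) j ∧ 0 ≤ (z + d) j := by
    intro j
    have hzj := hz j
    by_cases hj : z j = 0
    · have hjT : j ∉ T := fun h => by simpa [hj] using hT h
      have hjU : j ∉ U := fun h => by simpa [hj] using hU h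
      simp [d, hjT, hjU, hj]
    · simp only [d, Pi.add_apply, Pi.sub_apply]
      split_ifs <;> omega
  have hd : (fun j => (d j : ℝ)) = 0 := by
    refine hv.eq_zero_of_add_mem_of_sub_mem ?_ ?_
    · convert cast_mem_integerHull (fun j => (hzd j).2) (by rw [mulVec_add, hAz, hAd, add_zero])
      simp
    · convert cast_mem_integerHull (fun j => (hzd j).1) (by rw [mulVec_sub, hAz, hAd, sub_zero])
      simp
  ext j
  have := congrFun hd j
  simp only [d, Pi.sub_apply, Pi.zero_apply] at this
  split_ifs at this <;> simp_all

end IntegerHull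

section SignedSums

variable {ι : Type*} [DecidableEq ι]

theorem sum_powerset_sq_signed_sum {R : Type*} [CommRing R] (S : Finset ι) (a : ι → R) :
    ∑ T ∈ S.powerset, (2 * ∑ j ∈ T, a j - ∑ j ∈ S, a j) ^ 2 = 2 ^ #S * ∑ j ∈ S, a j ^ 2 := by
  induction S using Finset.induction_on with
  | empty => simp
  | @insert k S hk ih =>
    rw [sum_powerset_insert hk, ← sum_add_distrib]
    have hpair : ∀ T ∈ S.powerset,
        (2 * ∑ j ∈ T, a j - ∑ j ∈ insert k S, a j) ^ 2
          + (2 * ∑ j ∈ insert k T, a j - ∑ j ∈ insert k S, a j) ^ 2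
          = 2 * (2 * ∑ j ∈ T, a j - ∑ j ∈ S, a j) ^ 2 + 2 * a k ^ 2 := by
      intro T hT
      rw [sum_insert hk, sum_insert fun h => hk (mem_powerset.mp hT h)]
      ring
    rw [sum_congr rfl hpair, sum_add_distrib, ← mul_sum, ih, sum_const, card_powerset,
      sum_insert hk, card_insert_of_notMem hk, nsmul_eq_mul]
    push_cast
    ring

theorem sum_powerset_abs_signed_sum_le (S : Finset ι) (a : ι → ℝ) {M : ℝ}
    (hM : ∀ j ∈ S, |a j| ≤ M) :
    ∑ T ∈ S.powerset, |2 * ∑ j ∈ T, a j - ∑ j ∈ S, a j| ≤ 2 ^ #S * (√(#S) * M) := by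
  rcases S.eq_empty_or_nonempty with rfl | ⟨k, hk⟩
  · simp
  have hM0 : 0 ≤ M := (abs_nonneg _).trans (hM k hk)
  have hsq : ∑ j ∈ S, a j ^ 2 ≤ #S * M ^ 2 := by
    rw [← nsmul_eq_mul]
    refine sum_le_card_nsmul _ _ _ fun j hj => ?_
    rw [← sq_abs]
    exact pow_le_pow_left₀ (abs_nonneg _) (hM j hj) 2
  refine (pow_le_pow_iff_left₀ (by positivity) (by positivity) two_ne_zero).mp ?_
  calc (∑ T ∈ S.powerset, |2 * ∑ j ∈ T, a j - ∑ j ∈ S, a j|) ^ 2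
      ≤ #S.powerset * ∑ T ∈ S.powerset, |2 * ∑ j ∈ T, a j - ∑ j ∈ S, a j| ^ 2 :=
        sq_sum_le_card_mul_sum_sq
    _ = 2 ^ #S * (2 ^ #S * ∑ j ∈ S, a j ^ 2) := by
        simp_rw [sq_abs, sum_powerset_sq_signed_sum, card_powerset]
        push_cast
        ring
    _ ≤ 2 ^ #S * (2 ^ #S * (#S * M ^ 2)) := by gcongr
    _ = (2 ^ #S * (√(#S) * M)) ^ 2 := by
        rw [mul_pow, mul_pow, Real.sq_sqrt (Nat.cast_nonneg _)]
        ring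

end SignedSums

theorem card_le_two_mul_card_filter_le {α : Type*} {F : Finset α} {f : α → ℝ} {c : ℝ}
    (hc : 0 ≤ c) (hf : ∀ x ∈ F, 0 ≤ f x) (hsum : ∑ x ∈ F, f x ≤ #F * c) :
    #F ≤ 2 * #(F.filter fun x => f x ≤ 2 * c) := by
  classical
  set good := F.filter fun x => f x ≤ 2 * c
  set bad := F.filter fun x => ¬f x ≤ 2 * c
  have hsplit : #good + #bad = #F := card_filter_add_card_filter_not _
  rcases bad.eq_empty_or_nonempty with hbad | hbad
  · rw [← hsplit, hbad, card_empty]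
    omega
  have hlow : #bad * (2 * c) < ∑ x ∈ bad, f x := by
    simpa using sum_lt_sum_of_nonempty hbad fun x hx => not_le.mp (mem_filter.mp hx).2
  have hup : ∑ x ∈ bad, f x ≤ ∑ x ∈ F, f x :=
    sum_le_sum_of_subset_of_nonneg (filter_subset _ _) fun x hx _ => hf x hx
  have hsplitR : (#F : ℝ) = #good + #bad := by exact_mod_cast hsplit.symm
  have hlt : (#bad : ℝ) < #good := lt_of_mul_lt_mul_left (by nlinarith) hc
  have hlt' : #bad < #good := by exact_mod_cast hlt
  omega

theorem card_le_choose_of_sum_le {m L : ℕ} (G : Finset (Fin m → ℕ))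
    (hG : ∀ u ∈ G, ∑ i, u i ≤ L) : #G ≤ (L + m).choose m := by
  classical
  let slack : (Fin m → ℕ) → Option (Fin m) →₀ ℕ := fun u =>
    Finsupp.equivFunOnFinite.symm fun o => o.elim (L - ∑ i, u i) u
  have hmaps : ∀ u ∈ G, slack u ∈ (univ : Finset (Option (Fin m))).finsuppAntidiag L := by
    intro u hu
    simp [slack, Fintype.sum_option, Nat.sub_add_cancel (hG u hu)]
  have hinj : Set.InjOn slack G := fun u _ u' _ h => funext fun i => by
    simpa [slack] using DFunLike.congr_fun h (some i)
  calc #G ≤ #((univ : Finset (Option (Fin m))).finsuppAntidiag L) :=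
        card_le_card_of_injOn slack hmaps hinj
    _ = (L + m).choose m := by
        rw [card_finsuppAntidiag_nat_eq_choose, card_univ, Fintype.card_option, Fintype.card_fin,
          show m + 1 + L - 1 = L + m by omega, Nat.choose_symm_add]

/-- Folds `n` and `-n - 1` onto `n`; as these have opposite parities, the fold is injective on
each residue class modulo `2`. -/
def Int.foldToNat : ℤ → ℕ
  | .ofNat n => n
  | .negSucc n => n

theorem Int.foldToNat_le_natAbs (k : ℤ) : k.foldToNat ≤ k.natAbs := by
  cases k <;> simp [Int.foldToNat]

theorem Int.eq_of_foldToNat_eq {k l : ℤ} (hkl : k ≡ l [ZMOD 2]) (h : k.foldToNat = l.foldToNat) :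
    k = l := by
  rw [Int.ModEq] at hkl
  cases k <;> cases l <;> simp only [Int.foldToNat] at h <;> subst h <;>
    simp only [Int.ofNat_eq_natCast, Int.negSucc_eq] at hkl ⊢ <;> omega

theorem card_le_choose_of_modEq {m L : ℕ} (G : Finset (Fin m → ℤ)) (c : Fin m → ℤ)
    (hc : ∀ y ∈ G, ∀ i, y i ≡ c i [ZMOD 2]) (hG : ∀ y ∈ G, ∑ i, (y i).natAbs ≤ L) :
    #G ≤ (L + m).choose m := by
  classical
  have hinj : Set.InjOn (fun (y : Fin m → ℤ) i => (y i).foldToNat) G :=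
    fun y hy y' hy' h => funext fun i =>
      Int.eq_of_foldToNat_eq ((hc y hy i).trans (hc y' hy' i).symm) (congrFun h i)
  rw [← card_image_of_injOn hinj]
  refine card_le_choose_of_sum_le _ fun u hu => ?_
  obtain ⟨y, hy, rfl⟩ := mem_image.mp hu
  exact (sum_le_sum fun i _ => Int.foldToNat_le_natAbs (y i)).trans (hG y hy)

theorem Nat.choose_le_exp_mul_div_pow (n k : ℕ) :
    (n.choose k : ℝ) ≤ (Real.exp 1 * n / k) ^ k := by
  rcases eq_or_ne k 0 with rfl | hk
  · simp
  have hk' : (0 : ℝ) < k := by positivity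
  calc (n.choose k : ℝ) ≤ n ^ k / k.factorial := Nat.choose_le_pow_div k n
    _ = (n / k) ^ k * (k ^ k / k.factorial) := by rw [div_pow]; field_simp
    _ ≤ (n / k) ^ k * Real.exp k := by gcongr; exact Real.pow_div_factorial_le_exp _ hk'.le k
    _ = (Real.exp 1 * n / k) ^ k := by
        rw [← Real.exp_one_pow]
        ring

theorem two_pow_card_le_two_mul_choose {ι : Type*} [DecidableEq ι] {m Δ : ℕ}
    (A : Matrix (Fin m) ι ℤ) (S : Finset ι) (hA : ∀ i, ∀ j ∈ S, |A i j| ≤ Δ)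
    (hinj : Set.InjOn (fun T i => ∑ j ∈ T, A i j) S.powerset) :
    2 ^ #S ≤ 2 * (⌊2 * m * (√(#S) * Δ)⌋₊ + m).choose m := by
  set X := √(#S) * (Δ : ℝ)
  set D : Finset ι → Fin m → ℤ := fun T i => 2 * ∑ j ∈ T, A i j - ∑ j ∈ S, A i j
  set f : Finset ι → ℝ := fun T => ∑ i, |(D T i : ℝ)|
  have hDinj : Set.InjOn D S.powerset := fun T hT U hU h => hinj hT hU <| funext fun i => by
    simpa [D] using congrFun h i
  have htotal : ∑ T ∈ S.powerset, f T ≤ #S.powerset * (m * X) := by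
    calc ∑ T ∈ S.powerset, f T = ∑ i, ∑ T ∈ S.powerset, |(D T i : ℝ)| := sum_comm
      _ ≤ ∑ _i : Fin m, 2 ^ #S * X := sum_le_sum fun i _ => by
          simpa [D] using sum_powerset_abs_signed_sum_le S (fun j => (A i j : ℝ))
            fun j hj => by exact_mod_cast hA i j hj
      _ = #S.powerset * (m * X) := by
          rw [sum_const, card_univ, Fintype.card_fin, card_powerset, nsmul_eq_mul]
          push_cast
          ring
  have hmarkov := card_le_two_mul_card_filter_le (by positivity) (fun T _ => by positivity) htotal
  set good := S.powerset.filter fun T => f T ≤ 2 * (m * X)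
  have hcount : #good ≤ (⌊2 * m * X⌋₊ + m).choose m := by
    rw [← card_image_of_injOn (hDinj.mono (filter_subset _ _))]
    refine card_le_choose_of_modEq _ (D ∅) (fun y hy i => ?_) fun y hy => ?_
    · obtain ⟨T, -, rfl⟩ := mem_image.mp hy
      exact Int.modEq_iff_dvd.mpr ⟨-∑ j ∈ T, A i j, by simp only [D, sum_empty]; ring⟩
    · obtain ⟨T, hT, rfl⟩ := mem_image.mp hy
      refine Nat.le_floor ?_
      push_cast [Nat.cast_natAbs]
      linarith [(mem_filter.mp hT).2]
  rw [card_powerset] at hmarkov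
  omega

theorem two_mul_choose_le_pow {m : ℕ} (hm : m ≠ 0) {X : ℝ} (hX : 0 ≤ X) :
    2 * ((⌊2 * m * X⌋₊ + m).choose m : ℝ) ≤ (2 * Real.exp 1 * (2 * X + 1)) ^ m := by
  have hm' : (0 : ℝ) < m := by positivity
  calc 2 * ((⌊2 * m * X⌋₊ + m).choose m : ℝ)
      ≤ 2 * (Real.exp 1 * (⌊2 * m * X⌋₊ + m : ℕ) / m) ^ m := by
        gcongr; exact Nat.choose_le_exp_mul_div_pow _ _
    _ ≤ 2 * (Real.exp 1 * (2 * X + 1)) ^ m := by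
        rw [mul_div_assoc]
        gcongr
        rw [div_le_iff₀ hm']
        push_cast
        linarith [Nat.floor_le (by positivity : 0 ≤ 2 * m * X)]
    _ ≤ 2 ^ m * (Real.exp 1 * (2 * X + 1)) ^ m := by
        gcongr; exact le_self_pow₀ one_le_two hm
    _ = (2 * Real.exp 1 * (2 * X + 1)) ^ m := by rw [← mul_pow, mul_assoc]

theorem le_mul_logb_of_pow_le {b B : ℝ} (hb : 1 < b) {s m : ℕ} (h : b ^ s ≤ B ^ m) :
    (s : ℝ) ≤ m * Real.logb b B := by
  have := Real.logb_le_logb_of_le hb (pow_pos (by linarith) s) h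
  rwa [Real.logb_pow, Real.logb_pow, Real.logb_self_eq_one hb, mul_one] at this

theorem stmt13 {m n : ℕ} (A : Matrix (Fin m) (Fin n) ℤ) (b : Fin m → ℤ)
    (v : Fin n → ℝ) (hv : IsVertex (integerHull A b) v)
    (s : ℕ) (hs : s = (Function.support v).ncard)
    (Δ : ℕ) (hΔ : Δ = Finset.univ.sup fun p : Fin m × Fin n => (A p.1 p.2).natAbs) :
    (s : ℝ) ≤
      m * Real.logb 2 (4.24 * Real.exp 1 * Real.sqrt s * Δ + 2 * Real.exp 1) := by
  obtain ⟨z, hz0, hAz, rfl⟩ := hv.mem_of_convexHull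
  set S := univ.filter (z · ≠ 0)
  have hsS : s = #S := by
    rw [hs, ← Set.ncard_coe_finset]
    congr 1
    ext j
    simp [S]
  have hinj := hv.injOn_sum_cols hz0 hAz
  have hA : ∀ i, ∀ j ∈ S, |A i j| ≤ Δ := fun i j _ => by
    rw [hΔ, Int.abs_eq_natAbs, Nat.cast_le]
    exact le_sup (f := fun p : Fin m × Fin n => (A p.1 p.2).natAbs) (mem_univ (i, j))
  refine le_mul_logb_of_pow_le one_lt_two ?_
  rcases eq_or_ne m 0 with rfl | hm
  · have hS : S = ∅ :=
      (hinj (empty_mem_powerset S) (mem_powerset_self S) (Subsingleton.elim _ _)).symm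
    simp [hsS, hS]
  have hX : 0 ≤ √s * Δ := by positivity
  calc (2 : ℝ) ^ s ≤ 2 * ((⌊2 * m * (√s * Δ)⌋₊ + m).choose m : ℝ) := by
        exact_mod_cast hsS ▸ two_pow_card_le_two_mul_choose A S hA hinj
    _ ≤ (2 * Real.exp 1 * (2 * (√s * Δ) + 1)) ^ m := two_mul_choose_le_pow hm hX
    _ ≤ _ := by gcongr; nlinarith [Real.exp_pos 1]
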